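/- Over uniform evidence models with derived plausibility relation and derived belief: if every world w has some v ⪰ w such that all u ⪰ v satisfy φ (i.e., [A]⟨≼⟩[≼]φ holds), then φ holds at every point in the intersection of every scenario (i.e., [B]φ holds). If moreover the model is flat, the converse also holds, so [B]φ ↔ [A]⟨≼⟩[≼]φ. -/

import Mathlib

def FIP {W : Type*} (𝒳 : Set (Set W)) : Prop :=
  ∀ 𝒴 ⊆ 𝒳, 𝒴.Finite → (⋂₀ 𝒴).Nonempty

def UScenario {W : Type*} (ℰ : Set (Set W)) (𝒳 : Set (Set W)) : Prop :=
  𝒳 ⊆ ℰ ∧ FIP 𝒳 ∧ ∀ 𝒴, 𝒳 ⊆ 𝒴 → 𝒴 ⊆ ℰ → FIP 𝒴 → 𝒴 = 𝒳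

def USpecLE {W : Type*} (ℰ : Set (Set W)) (w v : W) : Prop :=
  ∀ X ∈ ℰ, w ∈ X → v ∈ X

/-!
Maximality of a scenario `𝒳` forces every evidence set meeting `⋂₀ 𝒳` into `𝒳`, so all points
of `⋂₀ 𝒳` are `≼`-equivalent and `⋂₀ 𝒳` is `≼`-upward closed; hence a `≼`-stable `φ`-region
above a point of `⋂₀ 𝒳` covers that point. Conversely, the evidence sets containing `w` extend,
by the Teichmüller–Tukey lemma, to a scenario; in a flat model its intersection contains some
`v ⪰ w`, and everything above `v` again lies in that intersection.
-/

section

open Set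

variable {W : Type*} {ℰ 𝒳 𝒴 : Set (Set W)} {v u : W}

theorem FIP.mono (h : FIP 𝒳) (hsub : 𝒴 ⊆ 𝒳) : FIP 𝒴 :=
  fun 𝒵 h𝒵 hfin => h 𝒵 (h𝒵.trans hsub) hfin

theorem fip_of_mem_sInter (hv : v ∈ ⋂₀ 𝒳) : FIP 𝒳 :=
  fun _ h𝒵 _ => ⟨v, fun Z hZ => hv Z (h𝒵 hZ)⟩

theorem isOfFiniteCharacter_fip (ℰ : Set (Set W)) :
    Order.IsOfFiniteCharacter {𝒳 | 𝒳 ⊆ ℰ ∧ FIP 𝒳} := by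
  intro 𝒳
  refine ⟨fun ⟨hsub, hfip⟩ 𝒴 h𝒴 _ => ⟨h𝒴.trans hsub, hfip.mono h𝒴⟩, fun h => ⟨?_, ?_⟩⟩
  · intro X hX
    exact (h {X} (singleton_subset_iff.mpr hX) (finite_singleton X)).1 rfl
  · intro 𝒵 h𝒵 hfin
    exact (h 𝒵 h𝒵 hfin).2 𝒵 subset_rfl hfin

theorem exists_uScenario_superset (h𝒴 : 𝒴 ⊆ ℰ) (hfip : FIP 𝒴) :
    ∃ 𝒳, 𝒴 ⊆ 𝒳 ∧ UScenario ℰ 𝒳 := by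
  obtain ⟨𝒳, h𝒴𝒳, hmax⟩ := (isOfFiniteCharacter_fip ℰ).exists_maximal ⟨h𝒴, hfip⟩
  exact ⟨𝒳, h𝒴𝒳, hmax.1.1, hmax.1.2,
    fun 𝒵 h𝒳𝒵 h𝒵 hfip𝒵 => (hmax.2 ⟨h𝒵, hfip𝒵⟩ h𝒳𝒵).antisymm h𝒳𝒵⟩

theorem UScenario.mem_of_sInter_inter_nonempty (h𝒳 : UScenario ℰ 𝒳) {X : Set W} (hX : X ∈ ℰ)
    (hmeet : (⋂₀ 𝒳 ∩ X).Nonempty) : X ∈ 𝒳 := by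
  obtain ⟨v, hv𝒳, hvX⟩ := hmeet
  have hfip : FIP (insert X 𝒳) := fip_of_mem_sInter (v := v) (by
    rw [sInter_insert]; exact ⟨hvX, hv𝒳⟩)
  rw [← h𝒳.2.2 _ (subset_insert X 𝒳) (insert_subset hX h𝒳.1) hfip]
  exact mem_insert X 𝒳

theorem mem_sInter_of_uSpecLE (h𝒳 : 𝒳 ⊆ ℰ) (hv : v ∈ ⋂₀ 𝒳) (hvu : USpecLE ℰ v u) :
    u ∈ ⋂₀ 𝒳 :=
  fun X hX => hvu X (h𝒳 hX) (hv X hX)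

theorem UScenario.uSpecLE_of_mem_sInter (h𝒳 : UScenario ℰ 𝒳) (hv : v ∈ ⋂₀ 𝒳) (hu : u ∈ ⋂₀ 𝒳) :
    USpecLE ℰ v u :=
  fun X hX hvX => hu X (h𝒳.mem_of_sInter_inter_nonempty hX ⟨v, hv, hvX⟩)

end

theorem stmt_9_general {W : Type*} (ℰ : Set (Set W))
    (φ : Set W) :
    ((∀ w : W, ∃ v, USpecLE ℰ w v ∧ ∀ u, USpecLE ℰ v u → u ∈ φ) →
        (∀ 𝒳, UScenario ℰ 𝒳 → ∀ v ∈ ⋂₀ 𝒳, v ∈ φ)) ∧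
    ((∀ 𝒳, UScenario ℰ 𝒳 → (⋂₀ 𝒳).Nonempty) →
        ((∀ 𝒳, UScenario ℰ 𝒳 → ∀ v ∈ ⋂₀ 𝒳, v ∈ φ) ↔
          (∀ w : W, ∃ v, USpecLE ℰ w v ∧ ∀ u, USpecLE ℰ v u → u ∈ φ))) := by
  have stable_imp_belief : (∀ w : W, ∃ v, USpecLE ℰ w v ∧ ∀ u, USpecLE ℰ v u → u ∈ φ) →
      ∀ 𝒳, UScenario ℰ 𝒳 → ∀ v ∈ ⋂₀ 𝒳, v ∈ φ := by
    intro hstable 𝒳 h𝒳 v hv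
    obtain ⟨v', hvv', hφ⟩ := hstable v
    exact hφ v (h𝒳.uSpecLE_of_mem_sInter (mem_sInter_of_uSpecLE h𝒳.1 hv hvv') hv)
  refine ⟨stable_imp_belief, fun hflat => ⟨fun hbelief w => ?_, stable_imp_belief⟩⟩
  obtain ⟨𝒳, hw𝒳, h𝒳⟩ := exists_uScenario_superset (𝒴 := {X ∈ ℰ | w ∈ X}) (Set.sep_subset ℰ _)
    (fip_of_mem_sInter (v := w) fun _ hX => hX.2)
  obtain ⟨v, hv⟩ := hflat 𝒳 h𝒳
  exact ⟨v, fun X hX hwX => hv X (hw𝒳 ⟨hX, hwX⟩),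
    fun u hvu => hbelief 𝒳 h𝒳 u (mem_sInter_of_uSpecLE h𝒳.1 hv hvu)⟩

theorem stmt_9 {W : Type*} (ℰ : Set (Set W))
    (hne : ∅ ∉ ℰ) (huniv : Set.univ ∈ ℰ) (φ : Set W) :
    ((∀ w : W, ∃ v, USpecLE ℰ w v ∧ ∀ u, USpecLE ℰ v u → u ∈ φ) →
        (∀ 𝒳, UScenario ℰ 𝒳 → ∀ v ∈ ⋂₀ 𝒳, v ∈ φ)) ∧
    ((∀ 𝒳, UScenario ℰ 𝒳 → (⋂₀ 𝒳).Nonempty) →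
        ((∀ 𝒳, UScenario ℰ 𝒳 → ∀ v ∈ ⋂₀ 𝒳, v ∈ φ) ↔
          (∀ w : W, ∃ v, USpecLE ℰ w v ∧ ∀ u, USpecLE ℰ v u → u ∈ φ))) :=
  stmt_9_general ℰ φ
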